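/- In the setting of the previous statement, applying D to g^{ab}W,_a Z,_b = 0 and using Dg^{ab}W,_a Z,_b = 0 yields g^{ab}(S,_a Z,_b + W,_a W,_b) = 0 where S = D²Z; writing S,_a = S_Z Z,_a + S_W W,_a + S_{W*} W*,_a + S_R R,_a (chain rule through the coordinates (Z,W,W*,R)) and using g^{00} = g^{0+} = g^{0−} = 0, this gives g^{++} = −S_R g^{01}. Similarly g^{−−} = −S*_R g^{01}. -/

import Mathlib

noncomputable section

/-- Points of the 4-manifold (in coordinates x^a). -/
abbrev X4 := Fin 4 → ℝ

/-- Total s-derivative D (holding x and s* fixed). -/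
def Dop (f : X4 → ℝ → ℝ → ℝ) (x : X4) (s t : ℝ) : ℝ := deriv (fun u => f x u t) s

/-- Total s*-derivative D* (holding x and s fixed). -/
def Dsop (f : X4 → ℝ → ℝ → ℝ) (x : X4) (s t : ℝ) : ℝ := deriv (fun u => f x s u) t

/-- Spatial gradient component f,_a (holding s, s* fixed). -/
def gr (f : X4 → ℝ → ℝ → ℝ) (a : Fin 4) (x : X4) (s t : ℝ) : ℝ :=
  fderiv ℝ (fun y => f y s t) x (Pi.single a 1)

/-- s-derivative of the metric components, (Dg)^{ab}. -/
def Dg (g : X4 → ℝ → ℝ → Fin 4 → Fin 4 → ℝ) (a b : Fin 4) (x : X4) (s t : ℝ) : ℝ :=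
  deriv (fun u => g x u t a b) s

/-- s*-derivative of the metric components, (D*g)^{ab}. -/
def Dsg (g : X4 → ℝ → ℝ → Fin 4 → Fin 4 → ℝ) (a b : Fin 4) (x : X4) (s t : ℝ) : ℝ :=
  deriv (fun u => g x s u a b) t

/-- g^{ab} u,_a v,_b -/
def ip (g : X4 → ℝ → ℝ → Fin 4 → Fin 4 → ℝ) (u v : X4 → ℝ → ℝ → ℝ)
    (x : X4) (s t : ℝ) : ℝ :=
  ∑ a, ∑ b, g x s t a b * gr u a x s t * gr v b x s t

/-- W = DZ -/
def Wf (Z : X4 → ℝ → ℝ → ℝ) : X4 → ℝ → ℝ → ℝ := fun y u w => Dop Z y u w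
/-- W* = D*Z -/
def Wsf (Z : X4 → ℝ → ℝ → ℝ) : X4 → ℝ → ℝ → ℝ := fun y u w => Dsop Z y u w
/-- R = DD*Z -/
def Rf (Z : X4 → ℝ → ℝ → ℝ) : X4 → ℝ → ℝ → ℝ := fun y u w => Dop (Wsf Z) y u w
/-- S = D²Z -/
def Sf (Z : X4 → ℝ → ℝ → ℝ) : X4 → ℝ → ℝ → ℝ := fun y u w => Dop (Wf Z) y u w
/-- S* = D*²Z -/
def Ssf (Z : X4 → ℝ → ℝ → ℝ) : X4 → ℝ → ℝ → ℝ := fun y u w => Dsop (Wsf Z) y u w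

abbrev E4 := X4 × ℝ × ℝ
def jf (f : X4 → ℝ → ℝ → ℝ) : E4 → ℝ := fun p => f p.1 p.2.1 p.2.2
def ea (a : Fin 4) : E4 := (Pi.single a 1, 0, 0)
def es : E4 := (0, 1, 0)
def et : E4 := (0, 0, 1)

lemma gr_eq' (F : E4 → ℝ) (hF : Differentiable ℝ F) (a : Fin 4) (x : X4) (s t : ℝ) :
    gr (fun y u w => F (y, u, w)) a x s t = fderiv ℝ F (x, s, t) (ea a) := by
  have h1 : HasFDerivAt (fun y : X4 => ((y, s, t) : E4))
      ((ContinuousLinearMap.id ℝ X4).prod 0) x :=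
    (hasFDerivAt_id x).prodMk (hasFDerivAt_const (s, t) x)
  have h2 : HasFDerivAt (fun y : X4 => F (y, s, t))
      ((fderiv ℝ F (x, s, t)).comp ((ContinuousLinearMap.id ℝ X4).prod 0)) x :=
    (hF (x, s, t)).hasFDerivAt.comp x h1
  simp only [gr]
  rw [h2.fderiv]
  simp [ea, ContinuousLinearMap.comp_apply]
  rfl

lemma Dop_eq' (F : E4 → ℝ) (hF : Differentiable ℝ F) (x : X4) (s t : ℝ) :
    Dop (fun y u w => F (y, u, w)) x s t = fderiv ℝ F (x, s, t) es := by
  have h1 : HasFDerivAt (fun u : ℝ => ((x, u, t) : E4))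
      ((0 : ℝ →L[ℝ] X4).prod ((ContinuousLinearMap.id ℝ ℝ).prod 0)) s :=
    (hasFDerivAt_const x s).prodMk ((hasFDerivAt_id s).prodMk (hasFDerivAt_const t s))
  have h2 : HasDerivAt (fun u : ℝ => F (x, u, t))
      (((fderiv ℝ F (x, s, t)).comp
        ((0 : ℝ →L[ℝ] X4).prod ((ContinuousLinearMap.id ℝ ℝ).prod 0))) 1) s :=
    ((hF (x, s, t)).hasFDerivAt.comp s h1).hasDerivAt
  simp only [Dop]
  rw [h2.deriv]
  simp [es]

lemma Dsop_eq' (F : E4 → ℝ) (hF : Differentiable ℝ F) (x : X4) (s t : ℝ) :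
    Dsop (fun y u w => F (y, u, w)) x s t = fderiv ℝ F (x, s, t) et := by
  have h1 : HasFDerivAt (fun w : ℝ => ((x, s, w) : E4))
      ((0 : ℝ →L[ℝ] X4).prod ((0 : ℝ →L[ℝ] ℝ).prod (ContinuousLinearMap.id ℝ ℝ))) t :=
    (hasFDerivAt_const x t).prodMk ((hasFDerivAt_const s t).prodMk (hasFDerivAt_id t))
  have h2 : HasDerivAt (fun w : ℝ => F (x, s, w))
      (((fderiv ℝ F (x, s, t)).comp
        ((0 : ℝ →L[ℝ] X4).prod ((0 : ℝ →L[ℝ] ℝ).prod (ContinuousLinearMap.id ℝ ℝ)))) 1) t :=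
    ((hF (x, s, t)).hasFDerivAt.comp t h1).hasDerivAt
  simp only [Dsop]
  rw [h2.deriv]
  simp [et]

lemma sm_fderiv {F : E4 → ℝ} (hF : ContDiff ℝ (⊤ : ℕ∞) F) (v : E4) :
    ContDiff ℝ (⊤ : ℕ∞) (fun p => fderiv ℝ F p v) :=
  (hF.fderiv_right le_rfl).clm_apply contDiff_const

lemma swap_fderiv {F : E4 → ℝ} (hF : ContDiff ℝ (⊤ : ℕ∞) F) (p v w : E4) :
    fderiv ℝ (fun q => fderiv ℝ F q v) p w = fderiv ℝ (fun q => fderiv ℝ F q w) p v := by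
  have hsymm : IsSymmSndFDerivAt ℝ F p := hF.contDiffAt.isSymmSndFDerivAt (by rw [minSmoothness_of_isRCLikeNormedField]; exact WithTop.coe_le_coe.mpr (le_top : (2 : ℕ∞) ≤ ⊤))
  have hd : DifferentiableAt ℝ (fderiv ℝ F) p :=
    ((hF.fderiv_right (m := (⊤ : ℕ∞)) (le_refl _)).differentiable (by simp)).differentiableAt
  have e : ∀ v w : E4, fderiv ℝ (fun q => fderiv ℝ F q v) p w = fderiv ℝ (fderiv ℝ F) p w v := by
    intro v w
    rw [fderiv_clm_apply hd (differentiableAt_const v)]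
    simp
  rw [e, e, hsymm w v]

lemma jf_Dop {f : X4 → ℝ → ℝ → ℝ} (hf : ContDiff ℝ (⊤ : ℕ∞) (jf f)) :
    jf (fun y u w => Dop f y u w) = fun p => fderiv ℝ (jf f) p es := by
  funext p
  exact Dop_eq' (jf f) (hf.differentiable (by simp)) p.1 p.2.1 p.2.2

lemma jf_Dsop {f : X4 → ℝ → ℝ → ℝ} (hf : ContDiff ℝ (⊤ : ℕ∞) (jf f)) :
    jf (fun y u w => Dsop f y u w) = fun p => fderiv ℝ (jf f) p et := by
  funext p
  exact Dsop_eq' (jf f) (hf.differentiable (by simp)) p.1 p.2.1 p.2.2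

lemma gr_eq {f : X4 → ℝ → ℝ → ℝ} (hf : Differentiable ℝ (jf f)) (a : Fin 4) (x : X4) (s t : ℝ) :
    gr f a x s t = fderiv ℝ (jf f) (x, s, t) (ea a) :=
  gr_eq' (jf f) hf a x s t

/-- D and gradient commute. -/
lemma hasDeriv_gr {f : X4 → ℝ → ℝ → ℝ} (hf : ContDiff ℝ (⊤ : ℕ∞) (jf f)) (a : Fin 4) (x : X4) (s t : ℝ) :
    HasDerivAt (fun u => gr f a x u t) (gr (fun y u w => Dop f y u w) a x s t) s := by
  set F := jf f with hF
  have e1 : (fun u => gr f a x u t) = fun u => (fun p => fderiv ℝ F p (ea a)) (x, u, t) :=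
    funext fun u => gr_eq (hf.differentiable (by simp)) a x u t
  have hG : ContDiff ℝ (⊤ : ℕ∞) (fun p => fderiv ℝ F p (ea a)) := sm_fderiv hf _
  have hH : ContDiff ℝ (⊤ : ℕ∞) (fun p => fderiv ℝ F p es) := sm_fderiv hf _
  have e2 : gr (fun y u w => Dop f y u w) a x s t
      = fderiv ℝ (fun p => fderiv ℝ F p es) (x, s, t) (ea a) := by
    have := gr_eq (f := fun y u w => Dop f y u w)
      (by rw [show jf (fun y u w => Dop f y u w) = fun p => fderiv ℝ F p es from jf_Dop hf]
          exact hH.differentiable (by simp)) a x s t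
    rw [this, jf_Dop hf]
  have e3 : gr (fun y u w => Dop f y u w) a x s t
      = fderiv ℝ (fun p => fderiv ℝ F p (ea a)) (x, s, t) es := by
    rw [e2, swap_fderiv hf]
  rw [e1, e3]
  have e4 := Dop_eq' (fun p => fderiv ℝ F p (ea a)) (hG.differentiable (by simp)) x s t
  simp only [Dop] at e4
  rw [← e4]
  apply DifferentiableAt.hasDerivAt
  exact ((hG.differentiable (by simp)).comp
    ((differentiable_const x).prodMk (differentiable_id.prodMk (differentiable_const t)))).differentiableAt

/-- D* and gradient commute. -/
lemma hasDeriv_gr_t {f : X4 → ℝ → ℝ → ℝ} (hf : ContDiff ℝ (⊤ : ℕ∞) (jf f)) (a : Fin 4) (x : X4) (s t : ℝ) :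
    HasDerivAt (fun w => gr f a x s w) (gr (fun y u w => Dsop f y u w) a x s t) t := by
  set F := jf f with hF
  have e1 : (fun w => gr f a x s w) = fun w => (fun p => fderiv ℝ F p (ea a)) (x, s, w) :=
    funext fun w => gr_eq (hf.differentiable (by simp)) a x s w
  have hG : ContDiff ℝ (⊤ : ℕ∞) (fun p => fderiv ℝ F p (ea a)) := sm_fderiv hf _
  have hH : ContDiff ℝ (⊤ : ℕ∞) (fun p => fderiv ℝ F p et) := sm_fderiv hf _
  have e2 : gr (fun y u w => Dsop f y u w) a x s t
      = fderiv ℝ (fun p => fderiv ℝ F p et) (x, s, t) (ea a) := by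
    have := gr_eq (f := fun y u w => Dsop f y u w)
      (by rw [show jf (fun y u w => Dsop f y u w) = fun p => fderiv ℝ F p et from jf_Dsop hf]
          exact hH.differentiable (by simp)) a x s t
    rw [this, jf_Dsop hf]
  have e3 : gr (fun y u w => Dsop f y u w) a x s t
      = fderiv ℝ (fun p => fderiv ℝ F p (ea a)) (x, s, t) et := by
    rw [e2, swap_fderiv hf]
  rw [e1, e3]
  have e4 := Dsop_eq' (fun p => fderiv ℝ F p (ea a)) (hG.differentiable (by simp)) x s t
  simp only [Dsop] at e4
  rw [← e4]
  apply DifferentiableAt.hasDerivAt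
  exact ((hG.differentiable (by simp)).comp
    ((differentiable_const x).prodMk ((differentiable_const s).prodMk differentiable_id))).differentiableAt

/-- applying D to g^{ab}W,_aZ,_b = 0 and using Dg^{ab}W,_aZ,_b = 0
yields g^{ab}(S,_aZ,_b + W,_aW,_b) = 0; with the chain rule
S,_a = S_Z Z,_a + S_W W,_a + S_{W*} W*,_a + S_R R,_a and g^{00} = g^{0+} = g^{0-} = 0
this gives g^{++} = -S_R g^{01}. Similarly g^{--} = -S*_R g^{01}. -/
theorem stmt15 (g : X4 → ℝ → ℝ → Fin 4 → Fin 4 → ℝ) (Z : X4 → ℝ → ℝ → ℝ)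
    (SZ SW SWs SR SsZ SsW SsWs SsR : X4 → ℝ → ℝ → ℝ)
    (hZ : ContDiff ℝ (⊤ : ℕ∞) (fun p : X4 × ℝ × ℝ => Z p.1 p.2.1 p.2.2))
    (hg : ∀ a b, ContDiff ℝ (⊤ : ℕ∞) (fun p : X4 × ℝ × ℝ => g p.1 p.2.1 p.2.2 a b))
    (hsym : ∀ x s t a b, g x s t a b = g x s t b a)
    (h00 : ∀ x s t, ip g Z Z x s t = 0)
    (h0p : ∀ x s t, ip g (Wf Z) Z x s t = 0)
    (h0m : ∀ x s t, ip g (Wsf Z) Z x s t = 0)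
    (hDg : ∀ x s t, (∑ a, ∑ b, Dg g a b x s t * gr (Wf Z) a x s t * gr Z b x s t) = 0)
    (hDsg : ∀ x s t, (∑ a, ∑ b, Dsg g a b x s t * gr (Wsf Z) a x s t * gr Z b x s t) = 0)
    (hchain : ∀ x s t a, gr (Sf Z) a x s t
        = SZ x s t * gr Z a x s t + SW x s t * gr (Wf Z) a x s t
          + SWs x s t * gr (Wsf Z) a x s t + SR x s t * gr (Rf Z) a x s t)
    (hchains : ∀ x s t a, gr (Ssf Z) a x s t
        = SsZ x s t * gr Z a x s t + SsW x s t * gr (Wf Z) a x s t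
          + SsWs x s t * gr (Wsf Z) a x s t + SsR x s t * gr (Rf Z) a x s t) :
    (∀ x s t, ip g (Sf Z) Z x s t + ip g (Wf Z) (Wf Z) x s t = 0) ∧
    (∀ x s t, ip g (Wf Z) (Wf Z) x s t = -(SR x s t) * ip g Z (Rf Z) x s t) ∧
    (∀ x s t, ip g (Wsf Z) (Wsf Z) x s t = -(SsR x s t) * ip g Z (Rf Z) x s t) := by
  have hjZ : ContDiff ℝ (⊤ : ℕ∞) (jf Z) := hZ
  have hjW : ContDiff ℝ (⊤ : ℕ∞) (jf (Wf Z)) := by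
    show ContDiff ℝ (⊤ : ℕ∞) (jf (fun y u w => Dop Z y u w))
    rw [jf_Dop hjZ]
    exact sm_fderiv hjZ es
  have hjWs : ContDiff ℝ (⊤ : ℕ∞) (jf (Wsf Z)) := by
    show ContDiff ℝ (⊤ : ℕ∞) (jf (fun y u w => Dsop Z y u w))
    rw [jf_Dsop hjZ]
    exact sm_fderiv hjZ et
  have ip_symm : ∀ u v x s t, ip g u v x s t = ip g v u x s t := by
    intro u v x s t
    rw [ip, ip, Finset.sum_comm]
    exact Finset.sum_congr rfl fun a _ => Finset.sum_congr rfl fun b _ => by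
      rw [hsym]; ring
  -- Part 1
  have key1 : ∀ x s t, ip g (Sf Z) Z x s t + ip g (Wf Z) (Wf Z) x s t = 0 := by
    intro x s t
    have hgd : ∀ a b, HasDerivAt (fun u => g x u t a b) (Dg g a b x s t) s := by
      intro a b
      exact DifferentiableAt.hasDerivAt
        (((( hg a b).differentiable (by simp)).comp
          ((differentiable_const x).prodMk (differentiable_id.prodMk (differentiable_const t)))).differentiableAt)
    have hW : ∀ a, HasDerivAt (fun u => gr (Wf Z) a x u t) (gr (Sf Z) a x s t) s :=
      fun a => hasDeriv_gr hjW a x s t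
    have hZb : ∀ b, HasDerivAt (fun u => gr Z b x u t) (gr (Wf Z) b x s t) s :=
      fun b => hasDeriv_gr hjZ b x s t
    have hsum : HasDerivAt (fun u => ∑ a, ∑ b, g x u t a b * gr (Wf Z) a x u t * gr Z b x u t)
        (∑ a, ∑ b, ((Dg g a b x s t * gr (Wf Z) a x s t + g x s t a b * gr (Sf Z) a x s t)
            * gr Z b x s t
          + g x s t a b * gr (Wf Z) a x s t * gr (Wf Z) b x s t)) s := by
      apply HasDerivAt.fun_sum
      intro a _
      apply HasDerivAt.fun_sum
      intro b _
      exact ((hgd a b).mul (hW a)).mul (hZb b)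
    have hz : (fun u => ∑ a, ∑ b, g x u t a b * gr (Wf Z) a x u t * gr Z b x u t)
        = fun _ => (0 : ℝ) := funext fun u => h0p x u t
    rw [hz] at hsum
    have h0 := hsum.unique (hasDerivAt_const s 0)
    have expand : (∑ a, ∑ b, ((Dg g a b x s t * gr (Wf Z) a x s t + g x s t a b * gr (Sf Z) a x s t)
            * gr Z b x s t
          + g x s t a b * gr (Wf Z) a x s t * gr (Wf Z) b x s t))
        = (∑ a, ∑ b, Dg g a b x s t * gr (Wf Z) a x s t * gr Z b x s t)
          + (ip g (Sf Z) Z x s t + ip g (Wf Z) (Wf Z) x s t) := by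
      simp only [ip, add_mul, Finset.sum_add_distrib]
      ring
    rw [expand, hDg x s t, zero_add] at h0
    exact h0
  -- chain rule consequence
  have hSip : ∀ x s t, ip g (Sf Z) Z x s t = SR x s t * ip g (Rf Z) Z x s t := by
    intro x s t
    have e : ∀ a b : Fin 4, g x s t a b * gr (Sf Z) a x s t * gr Z b x s t
        = SZ x s t * (g x s t a b * gr Z a x s t * gr Z b x s t)
        + SW x s t * (g x s t a b * gr (Wf Z) a x s t * gr Z b x s t)
        + SWs x s t * (g x s t a b * gr (Wsf Z) a x s t * gr Z b x s t)
        + SR x s t * (g x s t a b * gr (Rf Z) a x s t * gr Z b x s t) := by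
      intro a b; rw [hchain]; ring
    have step1 : ip g (Sf Z) Z x s t
        = ∑ a, ∑ b, (SZ x s t * (g x s t a b * gr Z a x s t * gr Z b x s t)
        + SW x s t * (g x s t a b * gr (Wf Z) a x s t * gr Z b x s t)
        + SWs x s t * (g x s t a b * gr (Wsf Z) a x s t * gr Z b x s t)
        + SR x s t * (g x s t a b * gr (Rf Z) a x s t * gr Z b x s t)) :=
      Finset.sum_congr rfl fun a _ => Finset.sum_congr rfl fun b _ => e a b
    have step2 : ip g (Sf Z) Z x s t
        = SZ x s t * ip g Z Z x s t + SW x s t * ip g (Wf Z) Z x s t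
          + SWs x s t * ip g (Wsf Z) Z x s t + SR x s t * ip g (Rf Z) Z x s t := by
      rw [step1]
      simp only [ip, Finset.mul_sum, Finset.sum_add_distrib]
    rw [step2, h00, h0p, h0m]
    ring
  have hSsip : ∀ x s t, ip g (Ssf Z) Z x s t = SsR x s t * ip g (Rf Z) Z x s t := by
    intro x s t
    have e : ∀ a b : Fin 4, g x s t a b * gr (Ssf Z) a x s t * gr Z b x s t
        = SsZ x s t * (g x s t a b * gr Z a x s t * gr Z b x s t)
        + SsW x s t * (g x s t a b * gr (Wf Z) a x s t * gr Z b x s t)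
        + SsWs x s t * (g x s t a b * gr (Wsf Z) a x s t * gr Z b x s t)
        + SsR x s t * (g x s t a b * gr (Rf Z) a x s t * gr Z b x s t) := by
      intro a b; rw [hchains]; ring
    have step1 : ip g (Ssf Z) Z x s t
        = ∑ a, ∑ b, (SsZ x s t * (g x s t a b * gr Z a x s t * gr Z b x s t)
        + SsW x s t * (g x s t a b * gr (Wf Z) a x s t * gr Z b x s t)
        + SsWs x s t * (g x s t a b * gr (Wsf Z) a x s t * gr Z b x s t)
        + SsR x s t * (g x s t a b * gr (Rf Z) a x s t * gr Z b x s t)) :=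
      Finset.sum_congr rfl fun a _ => Finset.sum_congr rfl fun b _ => e a b
    have step2 : ip g (Ssf Z) Z x s t
        = SsZ x s t * ip g Z Z x s t + SsW x s t * ip g (Wf Z) Z x s t
          + SsWs x s t * ip g (Wsf Z) Z x s t + SsR x s t * ip g (Rf Z) Z x s t := by
      rw [step1]
      simp only [ip, Finset.mul_sum, Finset.sum_add_distrib]
    rw [step2, h00, h0p, h0m]
    ring
  -- Part 3 analogue of key1
  have key3 : ∀ x s t, ip g (Ssf Z) Z x s t + ip g (Wsf Z) (Wsf Z) x s t = 0 := by
    intro x s t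
    have hgd : ∀ a b, HasDerivAt (fun w => g x s w a b) (Dsg g a b x s t) t := by
      intro a b
      exact DifferentiableAt.hasDerivAt
        (((( hg a b).differentiable (by simp)).comp
          ((differentiable_const x).prodMk ((differentiable_const s).prodMk differentiable_id))).differentiableAt)
    have hW : ∀ a, HasDerivAt (fun w => gr (Wsf Z) a x s w) (gr (Ssf Z) a x s t) t :=
      fun a => hasDeriv_gr_t hjWs a x s t
    have hZb : ∀ b, HasDerivAt (fun w => gr Z b x s w) (gr (Wsf Z) b x s t) t :=
      fun b => hasDeriv_gr_t hjZ b x s t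
    have hsum : HasDerivAt (fun w => ∑ a, ∑ b, g x s w a b * gr (Wsf Z) a x s w * gr Z b x s w)
        (∑ a, ∑ b, ((Dsg g a b x s t * gr (Wsf Z) a x s t + g x s t a b * gr (Ssf Z) a x s t)
            * gr Z b x s t
          + g x s t a b * gr (Wsf Z) a x s t * gr (Wsf Z) b x s t)) t := by
      apply HasDerivAt.fun_sum
      intro a _
      apply HasDerivAt.fun_sum
      intro b _
      exact ((hgd a b).mul (hW a)).mul (hZb b)
    have hz : (fun w => ∑ a, ∑ b, g x s w a b * gr (Wsf Z) a x s w * gr Z b x s w)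
        = fun _ => (0 : ℝ) := funext fun w => h0m x s w
    rw [hz] at hsum
    have h0 := hsum.unique (hasDerivAt_const t 0)
    have expand : (∑ a, ∑ b, ((Dsg g a b x s t * gr (Wsf Z) a x s t + g x s t a b * gr (Ssf Z) a x s t)
            * gr Z b x s t
          + g x s t a b * gr (Wsf Z) a x s t * gr (Wsf Z) b x s t))
        = (∑ a, ∑ b, Dsg g a b x s t * gr (Wsf Z) a x s t * gr Z b x s t)
          + (ip g (Ssf Z) Z x s t + ip g (Wsf Z) (Wsf Z) x s t) := by
      simp only [ip, add_mul, Finset.sum_add_distrib]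
      ring
    rw [expand, hDsg x s t, zero_add] at h0
    exact h0
  refine ⟨key1, ?_, ?_⟩
  · intro x s t
    have h := key1 x s t
    rw [hSip x s t, ip_symm (Rf Z) Z x s t] at h
    linarith [h]
  · intro x s t
    have h := key3 x s t
    rw [hSsip x s t, ip_symm (Rf Z) Z x s t] at h
    linarith [h]
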